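/- arXiv:2307.12795 — 2 statements merged into one kernel-verified Lean document; each statement's English description precedes it below -/
import Mathlib

section
/- Let g(P) = (1/12)∏_{i=1}^{N_r}(1 + Pλ_i/(4σ²))^{-1} + (1/4)∏_{i=1}^{N_r}(1 + Pλ_i/(3σ²))^{-1} with all λ_i > 0 and σ² > 0. Then lim_{P→∞} (-log₂ g(P))/(log₂ P) = N_r, i.e., the diversity order of the scheme equals N_r. -/
/-!
Writing `a i = λ i / (4σ²)` and `b i = λ i / (3σ²)`, each factor `(1 + P a i)⁻¹` equals
`P⁻¹ (P⁻¹ + a i)⁻¹`, so `g P = P ^ (-N_r) h P` where `h P → (1/12) ∏ (a i)⁻¹ + (1/4) ∏ (b i)⁻¹ > 0`.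
Hence `-log g P / log P = N_r - log h P / log P`, and the correction term vanishes because
`log h P` stays bounded while `log P → ∞`.
-/

open Filter Topology Finset

theorem tendsto_neg_log_div_log_of_eventuallyEq_rpow_mul {g h : ℝ → ℝ} {r L : ℝ} (hL : 0 < L)
    (hh : Tendsto h atTop (𝓝 L)) (hg : g =ᶠ[atTop] fun P => P ^ (-r) * h P) :
    Tendsto (fun P => -Real.log (g P) / Real.log P) atTop (𝓝 r) := by
  have hlog_h : Tendsto (fun P => Real.log (h P) / Real.log P) atTop (𝓝 0) :=
    ((Real.continuousAt_log hL.ne').tendsto.comp hh).div_atTop Real.tendsto_log_atTop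
  have hrewrite : (fun P => r - Real.log (h P) / Real.log P)
      =ᶠ[atTop] fun P => -Real.log (g P) / Real.log P := by
    filter_upwards [hg, eventually_gt_atTop 1, hh.eventually (eventually_gt_nhds hL)]
      with P hgP hP hhP
    have hlogP : Real.log P ≠ 0 := (Real.log_pos hP).ne'
    rw [hgP, Real.log_mul (by positivity) hhP.ne', Real.log_rpow (by linarith)]
    field_simp
    ring
  simpa using (tendsto_const_nhds.sub hlog_h).congr' hrewrite

theorem prod_inv_one_add_mul {ι : Type*} [Fintype ι] (c : ι → ℝ) {P : ℝ} (hP : 0 < P) :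
    ∏ i, (1 + P * c i)⁻¹ = P ^ (-(Fintype.card ι : ℝ)) * ∏ i, (P⁻¹ + c i)⁻¹ := by
  have hfactor : ∀ i, (1 + P * c i)⁻¹ = P⁻¹ * (P⁻¹ + c i)⁻¹ := fun i => by
    rw [← mul_inv, mul_add, mul_inv_cancel₀ hP.ne']
  rw [prod_congr rfl fun i _ => hfactor i, prod_mul_distrib, prod_const, card_univ,
    Real.rpow_neg hP.le, Real.rpow_natCast, inv_pow]

theorem tendsto_prod_inv_inv_add {ι : Type*} [Fintype ι] {c : ι → ℝ} (hc : ∀ i, c i ≠ 0) :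
    Tendsto (fun P => ∏ i, (P⁻¹ + c i)⁻¹) atTop (𝓝 (∏ i, (c i)⁻¹)) :=
  tendsto_finsetProd _ fun i _ => by
    simpa using (tendsto_inv_atTop_zero.add_const (c i)).inv₀ (by simpa using hc i)

theorem srpm_diversity_order_general
    (Nr : ℕ) (lamEig : Fin Nr → ℝ) (hlam : ∀ i, 0 < lamEig i)
    (σ2 : ℝ) (hσ : 0 < σ2)
    (g : ℝ → ℝ)
    (hg : ∀ P : ℝ, g P = (1 / 12) * ∏ i, (1 + P * lamEig i / (4 * σ2))⁻¹
        + (1 / 4) * ∏ i, (1 + P * lamEig i / (3 * σ2))⁻¹) :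
    Filter.Tendsto (fun P : ℝ => (-Real.logb 2 (g P)) / Real.logb 2 P)
      Filter.atTop (nhds (Nr : ℝ)) := by
  set a : Fin Nr → ℝ := fun i => lamEig i / (4 * σ2)
  set b : Fin Nr → ℝ := fun i => lamEig i / (3 * σ2)
  have ha : ∀ i, 0 < a i := fun i => by positivity [hlam i]
  have hb : ∀ i, 0 < b i := fun i => by positivity [hlam i]
  have hlimit : Tendsto (fun P => (1 / 12) * ∏ i, (P⁻¹ + a i)⁻¹ + (1 / 4) * ∏ i, (P⁻¹ + b i)⁻¹)
      atTop (𝓝 ((1 / 12) * ∏ i, (a i)⁻¹ + (1 / 4) * ∏ i, (b i)⁻¹)) :=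
    ((tendsto_prod_inv_inv_add fun i => (ha i).ne').const_mul _).add
      ((tendsto_prod_inv_inv_add fun i => (hb i).ne').const_mul _)
  have hlimit_pos : 0 < (1 / 12) * ∏ i, (a i)⁻¹ + (1 / 4) * ∏ i, (b i)⁻¹ := by
    have := prod_pos fun i (_ : i ∈ univ) => inv_pos.2 (ha i)
    have := prod_pos fun i (_ : i ∈ univ) => inv_pos.2 (hb i)
    positivity
  have hfactor : g =ᶠ[atTop] fun P => P ^ (-(Nr : ℝ)) *
      ((1 / 12) * ∏ i, (P⁻¹ + a i)⁻¹ + (1 / 4) * ∏ i, (P⁻¹ + b i)⁻¹) := by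
    filter_upwards [eventually_gt_atTop 0] with P hP
    simp only [hg, mul_div_assoc, prod_inv_one_add_mul _ hP, Fintype.card_fin]
    ring
  have hlog2 : Real.log 2 ≠ 0 := (Real.log_pos one_lt_two).ne'
  simpa only [Real.logb, neg_div, div_div_div_cancel_right₀ hlog2] using
    tendsto_neg_log_div_log_of_eventuallyEq_rpow_mul hlimit_pos hlimit hfactor

/-- The diversity order of the approximate APEP
g(P) = (1/12)∏_i(1 + Pλ_i/(4σ²))⁻¹ + (1/4)∏_i(1 + Pλ_i/(3σ²))⁻¹ equals N_r, i.e.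
lim_{P→∞} (-log₂ g(P))/(log₂ P) = N_r. -/
theorem srpm_diversity_order
    (Nr : ℕ) (hNr : 0 < Nr) (lamEig : Fin Nr → ℝ) (hlam : ∀ i, 0 < lamEig i)
    (σ2 : ℝ) (hσ : 0 < σ2)
    (g : ℝ → ℝ)
    (hg : ∀ P : ℝ, g P = (1 / 12) * ∏ i, (1 + P * lamEig i / (4 * σ2))⁻¹
        + (1 / 4) * ∏ i, (1 + P * lamEig i / (3 * σ2))⁻¹) :
    Filter.Tendsto (fun P : ℝ => (-Real.logb 2 (g P)) / Real.logb 2 P)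
      Filter.atTop (nhds (Nr : ℝ)) :=
  srpm_diversity_order_general Nr lamEig hlam σ2 hσ g hg
end

section
/- For every x ≥ 0 and every partition 0 = θ_0 ≤ θ_1 ≤ ... ≤ θ_Q = π/2, the Gaussian Q-function satisfies Q(x) ≤ Σ_{i=1}^Q a_i e^{-b_i x²}, where a_i = (θ_i - θ_{i-1})/π and b_i = 1/(2 sin² θ_i). -/
open MeasureTheory Real Set Filter Topology

/-- The Gaussian tail function Q(x) = ∫_x^∞ (1/√(2π)) e^{-t²/2} dt. -/
noncomputable def gaussianQ (x : ℝ) : ℝ :=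
  ∫ t in Set.Ioi x, (Real.sqrt (2 * Real.pi))⁻¹ * Real.exp (-t ^ 2 / 2)

/-!
For `x ≥ 0`, Craig's formula `Q x = π⁻¹ ∫₀^{π/2} exp (-x² / (2 sin² θ)) dθ` holds: both sides are
continuous, equal `1/2` at `0`, and have the same derivative on `(0, ∞)`. The derivative of the
right-hand side is taken under the integral sign, and the substitution `u = x / tan θ` turns it into
`exp (-x²/2)` times a half Gaussian integral. As `sin` increases on `[0, π/2]`, the integrand
increases in `θ`, so its integral over `[θᵢ₋₁, θᵢ]` is at most `(θᵢ - θᵢ₋₁)` times its value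
at `θᵢ`.
-/

theorem intervalIntegral.sum_integral_adjacent_intervals_fin {E : Type*} [NormedAddCommGroup E]
    [NormedSpace ℝ E] {f : ℝ → E} {μ : Measure ℝ} {n : ℕ} {a : Fin (n + 1) → ℝ}
    (hint : ∀ i : Fin n, IntervalIntegrable f μ (a i.castSucc) (a i.succ)) :
    ∑ i : Fin n, ∫ x in a i.castSucc..a i.succ, f x ∂μ = ∫ x in a 0..a (Fin.last n), f x ∂μ := by
  set b : ℕ → ℝ := fun k => a ⟨min k n, by omega⟩
  have hb {k : ℕ} (hk : k ≤ n) : b k = a ⟨k, by omega⟩ := by simp only [b, min_eq_left hk]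
  have hsum := sum_integral_adjacent_intervals (a := b) (n := n) (μ := μ) (f := f)
    fun k hk => by rw [hb hk.le, hb hk]; exact hint ⟨k, hk⟩
  rw [hb n.zero_le, hb le_rfl, ← Fin.sum_univ_eq_sum_range] at hsum
  refine Eq.trans (Finset.sum_congr rfl fun i _ => ?_) hsum
  rw [hb i.is_lt.le, hb i.is_lt]
  rfl

noncomputable def gaussianDensity (t : ℝ) : ℝ := (√(2 * π))⁻¹ * exp (-t ^ 2 / 2)

lemma exp_neg_sq_div_two (t : ℝ) : exp (-t ^ 2 / 2) = exp (-(1 / 2) * t ^ 2) := by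
  ring_nf

lemma continuous_gaussianDensity : Continuous gaussianDensity := by
  unfold gaussianDensity
  fun_prop

lemma integrable_gaussianDensity : Integrable gaussianDensity := by
  convert (integrable_exp_neg_mul_sq (b := 1 / 2) (by norm_num)).const_mul (√(2 * π))⁻¹ using 1
  ext t
  rw [gaussianDensity, exp_neg_sq_div_two]

lemma integral_Ioi_exp_neg_sq_div_two : ∫ t in Ioi (0 : ℝ), exp (-t ^ 2 / 2) = √(2 * π) / 2 := by
  simp_rw [exp_neg_sq_div_two, integral_gaussian_Ioi, div_div_eq_mul_div, div_one, mul_comm π]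

lemma sqrt_two_pi_div_two : √(2 * π) / 2 = π * (√(2 * π))⁻¹ := by
  have h : √(2 * π) ^ 2 = 2 * π := sq_sqrt (by positivity)
  have : √(2 * π) ≠ 0 := by positivity
  field_simp
  linarith

lemma gaussianQ_zero : gaussianQ 0 = 1 / 2 := by
  rw [gaussianQ, integral_const_mul, integral_Ioi_exp_neg_sq_div_two]
  have : √(2 * π) ≠ 0 := by positivity
  field_simp

lemma gaussianQ_sub_gaussianQ (a b : ℝ) :
    gaussianQ a - gaussianQ b = ∫ t in a..b, gaussianDensity t :=
  intervalIntegral.integral_Ioi_sub_Ioi' integrable_gaussianDensity.integrableOn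
    integrable_gaussianDensity.integrableOn

lemma hasDerivAt_gaussianQ (x : ℝ) : HasDerivAt gaussianQ (-gaussianDensity x) x := by
  have hQ : gaussianQ = fun y => gaussianQ 0 - ∫ t in 0..y, gaussianDensity t := by
    ext y
    rw [← gaussianQ_sub_gaussianQ, sub_sub_cancel]
  rw [hQ]
  exact (intervalIntegral.integral_hasDerivAt_right integrable_gaussianDensity.intervalIntegrable
    (continuous_gaussianDensity.stronglyMeasurableAtFilter _ _)
    continuous_gaussianDensity.continuousAt).const_sub _

-- Where `sin θ = 0` this is `exp 0 = 1` (division by zero), so it is only meaningful on `(0, π/2]`.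
noncomputable def craigIntegrand (x θ : ℝ) : ℝ := exp (-x ^ 2 / (2 * sin θ ^ 2))

noncomputable def craigIntegral (x : ℝ) : ℝ := ∫ θ in 0..π / 2, craigIntegrand x θ

lemma measurable_craigIntegrand (x : ℝ) : Measurable (craigIntegrand x) := by
  unfold craigIntegrand
  fun_prop

lemma norm_craigIntegrand_le_one (x θ : ℝ) : ‖craigIntegrand x θ‖ ≤ 1 := by
  rw [craigIntegrand, norm_of_nonneg (exp_nonneg _), exp_le_one_iff, neg_div]
  exact neg_nonpos.2 (by positivity)

lemma intervalIntegrable_craigIntegrand (x a b : ℝ) :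
    IntervalIntegrable (craigIntegrand x) volume a b :=
  intervalIntegrable_const.mono_fun' (measurable_craigIntegrand x).aestronglyMeasurable
    (ae_of_all _ (norm_craigIntegrand_le_one x))

lemma continuous_craigIntegral : Continuous craigIntegral :=
  intervalIntegral.continuous_of_dominated_interval
    (fun x => (measurable_craigIntegrand x).aestronglyMeasurable)
    (fun x => ae_of_all _ fun θ _ => norm_craigIntegrand_le_one x θ) intervalIntegrable_const
    (ae_of_all _ fun θ _ => by unfold craigIntegrand; fun_prop)

lemma craigIntegral_zero : craigIntegral 0 = π / 2 := by
  simp [craigIntegral, craigIntegrand]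

lemma hasDerivAt_craigIntegrand (x θ : ℝ) :
    HasDerivAt (craigIntegrand · θ) (-(x / sin θ ^ 2) * craigIntegrand x θ) x := by
  have h : HasDerivAt (fun y => -y ^ 2 / (2 * sin θ ^ 2)) (-(2 * x) / (2 * sin θ ^ 2)) x := by
    simpa using (hasDerivAt_pow 2 x).neg.div_const (2 * sin θ ^ 2)
  refine h.exp.congr_deriv ?_
  rw [craigIntegrand]
  ring

lemma abs_div_sin_sq_mul_craigIntegrand_le {x : ℝ} (hx : 0 < x) (θ : ℝ) :
    |x / sin θ ^ 2 * craigIntegrand x θ| ≤ 2 / x := by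
  set t := x ^ 2 / (2 * sin θ ^ 2)
  have ht : x / sin θ ^ 2 = 2 / x * t := by
    rcases eq_or_ne (sin θ) 0 with h | h
    · simp [t, h]
    · simp only [t]
      field_simp
  have hte : t * exp (-t) ≤ 1 :=
    (mul_exp_neg_le_exp_neg_one t).trans (exp_le_one_iff.2 (by norm_num))
  rw [craigIntegrand, neg_div, ht, mul_assoc, abs_of_nonneg (by positivity)]
  exact mul_le_of_le_one_right (by positivity) hte

lemma hasDerivAt_craigIntegral {x : ℝ} (hx : 0 < x) :
    HasDerivAt craigIntegral (-∫ θ in 0..π / 2, x / sin θ ^ 2 * craigIntegrand x θ) x := by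
  have hball : Metric.ball x (x / 2) ∈ 𝓝 x := Metric.ball_mem_nhds x (half_pos hx)
  have hbound : ∀ y ∈ Metric.ball x (x / 2), ∀ θ,
      ‖-(y / sin θ ^ 2) * craigIntegrand y θ‖ ≤ 4 / x := by
    intro y hy θ
    have hy : x / 2 < y := by
      rw [Metric.mem_ball, Real.dist_eq] at hy
      linarith [(abs_lt.1 hy).1]
    rw [norm_eq_abs, neg_mul, abs_neg]
    calc _ ≤ 2 / y := abs_div_sin_sq_mul_craigIntegrand_le (by linarith) θ
      _ ≤ 4 / x := by rw [div_le_div_iff₀ (by linarith) hx]; linarith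
  have hderiv := intervalIntegral.hasDerivAt_integral_of_dominated_loc_of_deriv_le
    (a := 0) (b := π / 2) (bound := fun _ => 4 / x) hball
    (Eventually.of_forall fun y => (measurable_craigIntegrand y).aestronglyMeasurable)
    (intervalIntegrable_craigIntegrand x _ _)
    (Measurable.aestronglyMeasurable (by unfold craigIntegrand; fun_prop))
    (ae_of_all _ fun θ _ y hy => hbound y hy θ) intervalIntegrable_const
    (ae_of_all _ fun θ _ y _ => hasDerivAt_craigIntegrand y θ)
  rw [← intervalIntegral.integral_neg]
  simp_rw [← neg_mul]
  exact hderiv.2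

lemma hasDerivAt_div_tan (x : ℝ) {θ : ℝ} (hs : sin θ ≠ 0) (hc : cos θ ≠ 0) :
    HasDerivAt (fun φ => x / tan φ) (-(x / sin θ ^ 2)) θ := by
  have htan : tan θ ≠ 0 := by rw [tan_eq_sin_div_cos]; exact div_ne_zero hs hc
  refine (((hasDerivAt_tan hc).inv htan).const_mul x).congr_deriv ?_
  rw [tan_eq_sin_div_cos]
  field_simp

lemma antitoneOn_div_tan {x : ℝ} (hx : 0 ≤ x) :
    AntitoneOn (fun θ => x / tan θ) (Ioo 0 (π / 2)) := by
  intro a ha b hb hab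
  have hmem {θ : ℝ} (h : θ ∈ Ioo 0 (π / 2)) : θ ∈ Ioo (-(π / 2)) (π / 2) :=
    ⟨by linarith [h.1, pi_pos], h.2⟩
  exact div_le_div_of_nonneg_left hx (tan_pos_of_pos_of_lt_pi_div_two ha.1 ha.2)
    (strictMonoOn_tan.monotoneOn (hmem ha) (hmem hb) hab)

lemma image_div_tan_Ioo {x : ℝ} (hx : 0 < x) :
    (fun θ => x / tan θ) '' Ioo 0 (π / 2) = Ioi 0 := by
  ext u
  constructor
  · rintro ⟨θ, hθ, rfl⟩
    exact div_pos hx (tan_pos_of_pos_of_lt_pi_div_two hθ.1 hθ.2)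
  · intro (hu : 0 < u)
    refine ⟨arctan (x / u), ⟨arctan_pos.2 (by positivity), arctan_lt_pi_div_two _⟩, ?_⟩
    simp only [tan_arctan]
    field_simp

lemma integral_div_sin_sq_mul_craigIntegrand {x : ℝ} (hx : 0 < x) :
    ∫ θ in 0..π / 2, x / sin θ ^ 2 * craigIntegrand x θ = π * gaussianDensity x := by
  have hsin {θ : ℝ} (h : θ ∈ Ioo 0 (π / 2)) : sin θ ≠ 0 :=
    (sin_pos_of_pos_of_lt_pi h.1 (by linarith [h.2, pi_pos])).ne'
  have hcos {θ : ℝ} (h : θ ∈ Ioo 0 (π / 2)) : cos θ ≠ 0 :=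
    (cos_pos_of_mem_Ioo ⟨by linarith [h.1, pi_pos], h.2⟩).ne'
  have hsubst := integral_image_eq_integral_deriv_smul_of_antitoneOn measurableSet_Ioo
    (fun θ hθ => (hasDerivAt_div_tan x (hsin hθ) (hcos hθ)).hasDerivWithinAt)
    (antitoneOn_div_tan hx.le) (fun u => exp (-(x ^ 2 + u ^ 2) / 2))
  rw [image_div_tan_Ioo hx] at hsubst
  rw [intervalIntegral.integral_of_le (by positivity), integral_Ioc_eq_integral_Ioo]
  calc ∫ θ in Ioo 0 (π / 2), x / sin θ ^ 2 * craigIntegrand x θ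
      = ∫ θ in Ioo 0 (π / 2), -(-(x / sin θ ^ 2)) • exp (-(x ^ 2 + (x / tan θ) ^ 2) / 2) := by
        refine setIntegral_congr_fun measurableSet_Ioo fun θ hθ => ?_
        have := sin_sq_add_cos_sq θ
        rw [neg_neg, smul_eq_mul, craigIntegrand, tan_eq_sin_div_cos]
        congr 2
        field_simp [hsin hθ, hcos hθ]
        linear_combination this
    _ = exp (-x ^ 2 / 2) * ∫ u in Ioi 0, exp (-u ^ 2 / 2) := by
        rw [← hsubst, ← integral_const_mul]
        congr 1 with u
        rw [← exp_add]
        ring_nf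
    _ = π * gaussianDensity x := by
        rw [integral_Ioi_exp_neg_sq_div_two, sqrt_two_pi_div_two, gaussianDensity]
        ring

theorem gaussianQ_eq_inv_pi_mul_craigIntegral {x : ℝ} (hx : 0 ≤ x) :
    gaussianQ x = π⁻¹ * craigIntegral x := by
  set h : ℝ → ℝ := fun y => gaussianQ y - π⁻¹ * craigIntegral y with h_def
  have h_cont : Continuous h :=
    (continuous_iff_continuousAt.2 fun y => (hasDerivAt_gaussianQ y).continuousAt).sub
      (continuous_const.mul continuous_craigIntegral)
  have h_deriv {y : ℝ} (hy : 0 < y) : HasDerivAt h 0 y := by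
    refine ((hasDerivAt_gaussianQ y).sub
      ((hasDerivAt_craigIntegral hy).const_mul π⁻¹)).congr_deriv ?_
    rw [integral_div_sin_sq_mul_craigIntegrand hy]
    field_simp
    ring
  have h_zero : h 0 = 0 := by
    simp only [h_def, gaussianQ_zero, craigIntegral_zero]
    field_simp
    ring
  suffices h x = 0 by simpa only [h_def, sub_eq_zero] using this
  rcases hx.eq_or_lt with rfl | hx
  · exact h_zero
  obtain ⟨c, hc, hslope⟩ := exists_hasDerivAt_eq_slope h (fun _ => 0) hx h_cont.continuousOn
    fun y hy => h_deriv hy.1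
  rw [eq_comm, div_eq_zero_iff, h_zero] at hslope
  simp only [sub_zero] at hslope
  exact hslope.resolve_right hx.ne'

lemma monotoneOn_craigIntegrand (x : ℝ) : MonotoneOn (craigIntegrand x) (Ioc 0 (π / 2)) := by
  intro θ hθ φ hφ hθφ
  have hsin_pos : 0 < sin θ := sin_pos_of_pos_of_lt_pi hθ.1 (by linarith [hθ.2, pi_pos])
  have hsin_le : sin θ ≤ sin φ :=
    sin_le_sin_of_le_of_le_pi_div_two (by linarith [hθ.1, pi_pos]) hφ.2 hθφ
  rw [craigIntegrand, craigIntegrand, exp_le_exp, neg_div, neg_div, neg_le_neg_iff]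
  gcongr

lemma integral_craigIntegrand_le (x : ℝ) {a b : ℝ} (ha : 0 ≤ a) (hab : a ≤ b) (hb : b ≤ π / 2) :
    ∫ θ in a..b, craigIntegrand x θ ≤ (b - a) * craigIntegrand x b := by
  have hmem {θ : ℝ} (h₁ : a < θ) (h₂ : θ ≤ b) : θ ∈ Ioc 0 (π / 2) := ⟨ha.trans_lt h₁, h₂.trans hb⟩
  calc ∫ θ in a..b, craigIntegrand x θ ≤ ∫ _ in a..b, craigIntegrand x b :=
        intervalIntegral.integral_mono_on_of_le_Ioo hab (intervalIntegrable_craigIntegrand x a b)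
          intervalIntegrable_const fun θ hθ =>
            monotoneOn_craigIntegrand x (hmem hθ.1 hθ.2.le) (hmem (hθ.1.trans hθ.2) le_rfl) hθ.2.le
    _ = (b - a) * craigIntegrand x b := by rw [intervalIntegral.integral_const, smul_eq_mul]

theorem gaussianQ_exponential_upper_bound_general
    (Qn : ℕ) (θ : Fin (Qn + 1) → ℝ)
    (hmono : Monotone θ) (h0 : θ 0 = 0) (hlast : θ (Fin.last Qn) = Real.pi / 2)
    (x : ℝ) (hx : 0 ≤ x) :
    gaussianQ x ≤ ∑ i : Fin Qn,
      (θ i.succ - θ i.castSucc) / Real.pi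
        * Real.exp (-(1 / (2 * Real.sin (θ i.succ) ^ 2)) * x ^ 2) := by
  have hsplit : craigIntegral x =
      ∑ i : Fin Qn, ∫ φ in θ i.castSucc..θ i.succ, craigIntegrand x φ := by
    rw [intervalIntegral.sum_integral_adjacent_intervals_fin
      fun i => intervalIntegrable_craigIntegrand x _ _, h0, hlast, craigIntegral]
  rw [gaussianQ_eq_inv_pi_mul_craigIntegral hx, hsplit, Finset.mul_sum]
  refine Finset.sum_le_sum fun i _ => ?_
  have hpiece := integral_craigIntegrand_le x (h0.symm.le.trans (hmono (Fin.zero_le _)))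
    (hmono i.castSucc_le_succ) ((hmono (Fin.le_last _)).trans hlast.le)
  calc π⁻¹ * ∫ φ in θ i.castSucc..θ i.succ, craigIntegrand x φ
      ≤ π⁻¹ * ((θ i.succ - θ i.castSucc) * craigIntegrand x (θ i.succ)) := by gcongr
    _ = _ := by
      rw [craigIntegrand]
      ring_nf

/-- For every x ≥ 0 and every partition 0 = θ_0 ≤ θ_1 ≤ ... ≤ θ_Q = π/2,
Q(x) ≤ Σ_{i=1}^Q a_i e^{-b_i x²} with a_i = (θ_i - θ_{i-1})/π and b_i = 1/(2 sin² θ_i). -/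
theorem gaussianQ_exponential_upper_bound
    (Qn : ℕ) (hQn : 0 < Qn) (θ : Fin (Qn + 1) → ℝ)
    (hmono : Monotone θ) (h0 : θ 0 = 0) (hlast : θ (Fin.last Qn) = Real.pi / 2)
    (x : ℝ) (hx : 0 ≤ x) :
    gaussianQ x ≤ ∑ i : Fin Qn,
      (θ i.succ - θ i.castSucc) / Real.pi
        * Real.exp (-(1 / (2 * Real.sin (θ i.succ) ^ 2)) * x ^ 2) :=
  gaussianQ_exponential_upper_bound_general Qn θ hmono h0 hlast x hx
end
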